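/- arXiv:2303.09961 — 2 statements merged into one kernel-verified Lean document; each statement's English description precedes it below -/
import Mathlib

section
/- Let (φ_t) be a semigroup in 𝔻 and Δ a petal of (φ_t). Then for all z, w ∈ Δ and all t ≤ 0, |d_𝔻(z, φ_t(z)) − d_𝔻(w, φ_t(w))| ≤ 2·d_Δ(z, w). -/
open Filter Set

/-- The inverse hyperbolic tangent. -/
noncomputable def arctanh (x : ℝ) : ℝ := (1 / 2) * Real.log ((1 + x) / (1 - x))

/-- The hyperbolic distance of the unit disc:
`d_𝔻(z, w) = arctanh |(z - w)/(1 - conj z · w)|`. -/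
noncomputable def dD (z w : ℂ) : ℝ :=
  arctanh ‖(z - w) / (1 - (starRingEnd ℂ) z * w)‖

def unitDisc : Set ℂ := {z : ℂ | ‖z‖ < 1}

/-- A one-parameter semigroup of holomorphic self-maps of the unit disc
(which is not a group): `φ 0 = id`, the semigroup property holds for
nonnegative times, and `φ t → id` locally uniformly as `t → 0⁺`. -/
structure IsSemigroupD (φ : ℝ → ℂ → ℂ) : Prop where
  mapsTo : ∀ t : ℝ, 0 ≤ t → Set.MapsTo (φ t) unitDisc unitDisc
  holo : ∀ t : ℝ, 0 ≤ t → DifferentiableOn ℂ (φ t) unitDisc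
  id0 : ∀ z ∈ unitDisc, φ 0 z = z
  comp : ∀ s t : ℝ, 0 ≤ s → 0 ≤ t → ∀ z ∈ unitDisc, φ (s + t) z = φ s (φ t z)
  cont0 : TendstoLocallyUniformlyOn (fun t : ℝ => φ t) id (nhdsWithin 0 (Set.Ioi 0)) unitDisc
  notGroup : ∃ t : ℝ, 0 < t ∧ ¬ Set.BijOn (φ t) unitDisc unitDisc

/-- The backward invariant set `W = ⋂_{t ≥ 0} φ_t(𝔻)`. -/
def backwardInvSet (φ : ℝ → ℂ → ℂ) : Set ℂ :=
  ⋂ t ∈ Set.Ici (0 : ℝ), φ t '' unitDisc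

/-- A petal: a nonempty connected component of the interior of the backward invariant set. -/
def IsPetal (φ : ℝ → ℂ → ℂ) (Δ : Set ℂ) : Prop :=
  Δ.Nonempty ∧ ∃ z ∈ interior (backwardInvSet φ),
    Δ = connectedComponentIn (interior (backwardInvSet φ)) z

/-!
Schwarz–Pick applied to the inverse of `g : Δ → 𝔻`, a holomorphic map `𝔻 → Δ ⊆ 𝔻`, gives
`d_𝔻 ≤ d_Δ` on `Δ`. For `t ≤ 0`, `φ_t` is the inverse of the injective holomorphic map
`φ_{-t}|_Δ`, hence a holomorphic self-map of `Δ`, so it does not increase `d_Δ`. Two triangle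
inequalities for `d_𝔻` then give
`|d_𝔻(z, φ_t z) - d_𝔻(w, φ_t w)| ≤ d_𝔻(z, w) + d_𝔻(φ_t z, φ_t w) ≤ 2 d_Δ(z, w)`.
-/

open scoped Topology

section InverseHolomorphic

variable {f G : ℂ → ℂ} {U V : Set ℂ}

lemma not_eventually_eq_of_injOn {X Y : Type*} [TopologicalSpace X] {f : X → Y} {U : Set X}
    {x : X} [(𝓝[≠] x).NeBot] (hU : U ∈ 𝓝 x) (hinj : InjOn f U) :
    ¬ ∀ᶠ y in 𝓝 x, f y = f x := by
  intro h
  have hpunct : ∀ᶠ y in 𝓝[≠] x, f y = f x ∧ y ∈ U :=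
    eventually_nhdsWithin_of_eventually_nhds (h.and hU)
  obtain ⟨y, ⟨hfy, hyU⟩, hyx⟩ := (hpunct.and self_mem_nhdsWithin).exists
  exact hyx (hinj hyU (mem_of_mem_nhds hU) hfy)

lemma AnalyticAt.nhds_le_map_nhds_of_injOn {x : ℂ} (hf : AnalyticAt ℂ f x) (hU : U ∈ 𝓝 x)
    (hinj : InjOn f U) : 𝓝 (f x) ≤ map f (𝓝 x) :=
  hf.eventually_constant_or_nhds_le_map_nhds.resolve_left (not_eventually_eq_of_injOn hU hinj)

lemma AnalyticAt.eventually_deriv_ne_zero_of_injOn {x : ℂ} (hf : AnalyticAt ℂ f x)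
    (hU : U ∈ 𝓝 x) (hinj : InjOn f U) : ∀ᶠ y in 𝓝[≠] x, deriv f y ≠ 0 := by
  refine hf.deriv.eventually_eq_zero_or_eventually_ne_zero.resolve_left fun hzero => ?_
  obtain ⟨r, hr, hball⟩ := Metric.eventually_nhds_iff_ball.1 (hzero.and hf.eventually_analyticAt)
  refine not_eventually_eq_of_injOn hU hinj (Filter.mem_of_superset (Metric.ball_mem_nhds x hr)
    fun y hy => ?_)
  exact Metric.isOpen_ball.is_const_of_deriv_eq_zero (convex_ball x r).isPreconnected
    (fun z hz => (hball z hz).2.differentiableAt.differentiableWithinAt)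
    (fun z hz => (hball z hz).1) hy (Metric.mem_ball_self hr)

lemma continuousOn_of_leftInvOn_of_injOn (hU : IsOpen U) (hV : IsOpen V)
    (hf : AnalyticOnNhd ℂ f U) (hinj : InjOn f U) (hG : MapsTo G V U) (hfG : LeftInvOn f G V) :
    ContinuousOn G V := by
  intro a ha
  refine ContinuousAt.continuousWithinAt ?_
  have hGa : G a ∈ U := hG ha
  have hGf : ∀ᶠ u in 𝓝 (G a), G (f u) = u := by
    have hfV : f ⁻¹' V ∈ 𝓝 (G a) :=
      (hf _ hGa).continuousAt.preimage_mem_nhds (by rw [hfG ha]; exact hV.mem_nhds ha)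
    filter_upwards [hU.mem_nhds hGa, hfV] with u hu hfu
    exact hinj (hG hfu) hu (hfG hfu)
  have hle := (hf _ hGa).nhds_le_map_nhds_of_injOn (hU.mem_nhds hGa) hinj
  rw [hfG ha] at hle
  exact (tendsto_map'_iff.2 (tendsto_id.congr' (hGf.mono fun _ h => h.symm))).mono_left hle

theorem differentiableOn_of_leftInvOn_of_injOn (hU : IsOpen U) (hV : IsOpen V)
    (hf : DifferentiableOn ℂ f U) (hinj : InjOn f U) (hG : MapsTo G V U) (hfG : LeftInvOn f G V) :
    DifferentiableOn ℂ G V := by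
  have hfa : AnalyticOnNhd ℂ f U := hf.analyticOnNhd hU
  have hGc : ∀ a ∈ V, ContinuousAt G a := fun a ha =>
    (continuousOn_of_leftInvOn_of_injOn hU hV hfa hinj hG hfG).continuousAt (hV.mem_nhds ha)
  have hregular : ∀ a ∈ V, deriv f (G a) ≠ 0 → DifferentiableAt ℂ G a := fun a ha hne =>
    (HasDerivAt.of_local_left_inverse (hGc a ha) (hfa _ (hG ha)).differentiableAt.hasDerivAt hne
      (Filter.mem_of_superset (hV.mem_nhds ha) hfG)).differentiableAt
  intro a ha
  -- a critical value of `f` is isolated, so the singularity of `G` there is removable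
  have hcrit := eventually_nhdsWithin_iff.1
    ((hfa _ (hG ha)).eventually_deriv_ne_zero_of_injOn (hU.mem_nhds (hG ha)) hinj)
  refine (Complex.analyticAt_of_differentiable_on_punctured_nhds_of_continuousAt ?_
    (hGc a ha)).differentiableAt.differentiableWithinAt
  filter_upwards [nhdsWithin_le_nhds ((hGc a ha).eventually hcrit),
    nhdsWithin_le_nhds (hV.mem_nhds ha), self_mem_nhdsWithin] with b hb hbV hba
  refine hregular b hbV (hb fun hGb => hba ?_)
  rw [← hfG hbV, mem_singleton_iff.1 hGb, hfG ha, mem_singleton_iff]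

end InverseHolomorphic

section Hyperbolic

open ComplexConjugate

lemma unitDisc_eq_ball : unitDisc = Metric.ball 0 1 := by
  ext z
  simp [unitDisc]

lemma isOpen_unitDisc : IsOpen unitDisc := unitDisc_eq_ball ▸ Metric.isOpen_ball

lemma arctanh_le_arctanh {a b : ℝ} (ha : -1 < a) (hab : a ≤ b) (hb : b < 1) :
    arctanh a ≤ arctanh b := by
  unfold arctanh
  gcongr
  · exact div_pos (by linarith) (by linarith)
  · linarith

lemma arctanh_add {p q : ℝ} (hp₀ : -1 < p) (hp₁ : p < 1) (hq₀ : -1 < q) (hq₁ : q < 1) :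
    arctanh p + arctanh q = arctanh ((p + q) / (1 + p * q)) := by
  have hpq : 0 < 1 + p * q := by nlinarith [mul_pos (sub_pos.2 hp₁) (sub_pos.2 hq₁)]
  have hnum : 1 + (p + q) / (1 + p * q) = (1 + p) * (1 + q) / (1 + p * q) := by
    field_simp; ring
  have hden : 1 - (p + q) / (1 + p * q) = (1 - p) * (1 - q) / (1 + p * q) := by
    field_simp; ring
  have key : (1 + (p + q) / (1 + p * q)) / (1 - (p + q) / (1 + p * q))
      = (1 + p) / (1 - p) * ((1 + q) / (1 - q)) := by
    rw [hnum, hden]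
    field_simp
  unfold arctanh
  rw [key, Real.log_mul (div_pos (by linarith) (by linarith)).ne'
    (div_pos (by linarith) (by linarith)).ne']
  ring

variable {a u x y z w : ℂ}

lemma normSq_one_sub_conj_mul_sub_normSq_sub (z w : ℂ) :
    Complex.normSq (1 - conj z * w) - Complex.normSq (z - w)
      = (1 - Complex.normSq z) * (1 - Complex.normSq w) := by
  simp only [Complex.normSq_apply, Complex.sub_re, Complex.sub_im, Complex.mul_re, Complex.mul_im,
    Complex.one_re, Complex.one_im, Complex.conj_re, Complex.conj_im]
  ring

lemma norm_sub_lt_norm_one_sub_conj_mul (hz : z ∈ unitDisc) (hw : w ∈ unitDisc) :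
    ‖z - w‖ < ‖1 - conj z * w‖ := by
  have hz' : Complex.normSq z < 1 := by
    rw [Complex.normSq_eq_norm_sq]; exact pow_lt_one₀ (norm_nonneg z) hz two_ne_zero
  have hw' : Complex.normSq w < 1 := by
    rw [Complex.normSq_eq_norm_sq]; exact pow_lt_one₀ (norm_nonneg w) hw two_ne_zero
  rw [Complex.norm_def, Complex.norm_def]
  gcongr
  · exact Complex.normSq_nonneg _
  · nlinarith [normSq_one_sub_conj_mul_sub_normSq_sub z w]

lemma one_sub_conj_mul_ne_zero (hz : z ∈ unitDisc) (hw : w ∈ unitDisc) : 1 - conj z * w ≠ 0 :=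
  norm_pos_iff.1 ((norm_nonneg _).trans_lt (norm_sub_lt_norm_one_sub_conj_mul hz hw))

/-- The involutive automorphism of the disc exchanging `a` and `0`. -/
noncomputable def mobius (a u : ℂ) : ℂ := (a - u) / (1 - conj a * u)

lemma dD_eq_arctanh_norm_mobius (z w : ℂ) : dD z w = arctanh ‖mobius z w‖ := rfl

lemma mobius_mem_unitDisc (ha : a ∈ unitDisc) (hu : u ∈ unitDisc) : mobius a u ∈ unitDisc := by
  show ‖mobius a u‖ < 1
  rw [mobius, norm_div, div_lt_one ((norm_nonneg _).trans_lt
    (norm_sub_lt_norm_one_sub_conj_mul ha hu))]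
  exact norm_sub_lt_norm_one_sub_conj_mul ha hu

lemma mapsTo_mobius (ha : a ∈ unitDisc) : MapsTo (mobius a) unitDisc unitDisc :=
  fun _ hu => mobius_mem_unitDisc ha hu

lemma differentiableOn_mobius (ha : a ∈ unitDisc) : DifferentiableOn ℂ (mobius a) unitDisc :=
  fun _ hu => ((differentiableAt_const a).sub differentiableAt_id).div
    ((differentiableAt_const 1).sub ((differentiableAt_const _).mul differentiableAt_id))
    (one_sub_conj_mul_ne_zero ha hu) |>.differentiableWithinAt

lemma mobius_self (a : ℂ) : mobius a a = 0 := by simp [mobius]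

lemma mobius_zero (a : ℂ) : mobius a 0 = a := by simp [mobius]

lemma mobius_mobius (ha : a ∈ unitDisc) (hu : u ∈ unitDisc) : mobius a (mobius a u) = u := by
  have hau := one_sub_conj_mul_ne_zero ha hu
  have hua : 1 - u * conj a ≠ 0 := by rwa [mul_comm]
  have haa := one_sub_conj_mul_ne_zero ha ha
  unfold mobius
  rw [div_eq_iff]
  · field_simp
    ring
  · rw [show 1 - conj a * ((a - u) / (1 - conj a * u)) = (1 - conj a * a) / (1 - conj a * u) by
      field_simp; ring]
    exact div_ne_zero haa hau

lemma norm_mobius_comm (z w : ℂ) : ‖mobius z w‖ = ‖mobius w z‖ := by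
  rw [mobius, mobius, norm_div, norm_div, norm_sub_rev z w, ← Complex.norm_conj (1 - conj z * w)]
  simp [mul_comm]

lemma dD_comm (z w : ℂ) : dD z w = dD w z := by
  rw [dD_eq_arctanh_norm_mobius, dD_eq_arctanh_norm_mobius, norm_mobius_comm]

/-- The Schwarz–Pick lemma. -/
lemma norm_mobius_le_of_mapsTo {f : ℂ → ℂ} (hf : DifferentiableOn ℂ f unitDisc)
    (hmaps : MapsTo f unitDisc unitDisc) (hz : z ∈ unitDisc) (hw : w ∈ unitDisc) :
    ‖mobius (f z) (f w)‖ ≤ ‖mobius z w‖ := by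
  have hfz := hmaps hz
  set h : ℂ → ℂ := fun ζ => mobius (f z) (f (mobius z ζ))
  have hh : DifferentiableOn ℂ h unitDisc :=
    (differentiableOn_mobius hfz).comp (hf.comp (differentiableOn_mobius hz) (mapsTo_mobius hz))
      (hmaps.comp (mapsTo_mobius hz))
  have hmapsh : MapsTo h unitDisc unitDisc :=
    (mapsTo_mobius hfz).comp (hmaps.comp (mapsTo_mobius hz))
  have hschwarz := Complex.norm_le_norm_of_mapsTo_ball (unitDisc_eq_ball ▸ hh)
    ((unitDisc_eq_ball ▸ hmapsh).mono_right Metric.ball_subset_closedBall)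
    (by simp only [h, mobius_zero, mobius_self]) (mobius_mem_unitDisc hz hw)
  simpa only [h, mobius_mobius hz hw] using hschwarz

lemma dD_le_of_mapsTo {f : ℂ → ℂ} (hf : DifferentiableOn ℂ f unitDisc)
    (hmaps : MapsTo f unitDisc unitDisc) (hz : z ∈ unitDisc) (hw : w ∈ unitDisc) :
    dD (f z) (f w) ≤ dD z w :=
  arctanh_le_arctanh (neg_one_lt_zero.trans_le (norm_nonneg _))
    (norm_mobius_le_of_mapsTo hf hmaps hz hw) (mobius_mem_unitDisc hz hw)


lemma norm_mobius_le (hx : x ∈ unitDisc) (hy : y ∈ unitDisc) :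
    ‖mobius x y‖ ≤ (‖x‖ + ‖y‖) / (1 + ‖x‖ * ‖y‖) := by
  rw [mobius, norm_div, div_le_div_iff₀ (norm_pos_iff.2 (one_sub_conj_mul_ne_zero hx hy))
    (by positivity)]
  set s := ‖x‖
  set t := ‖y‖
  set r := (x * conj y).re
  have hs : s < 1 := hx
  have ht : t < 1 := hy
  have hr : -(s * t) ≤ r := by
    have := Complex.abs_re_le_norm (x * conj y)
    rw [norm_mul, Complex.norm_conj] at this
    exact neg_le_of_abs_le this
  have hnum : ‖x - y‖ ^ 2 = s ^ 2 + t ^ 2 - 2 * r := by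
    rw [← Complex.normSq_eq_norm_sq, Complex.normSq_sub, Complex.normSq_eq_norm_sq,
      Complex.normSq_eq_norm_sq]
  have hden : ‖1 - conj x * y‖ ^ 2 = 1 + s ^ 2 * t ^ 2 - 2 * r := by
    rw [← Complex.normSq_eq_norm_sq, Complex.normSq_sub, Complex.normSq_mul, Complex.normSq_conj,
      Complex.normSq_eq_norm_sq x, Complex.normSq_eq_norm_sq y, map_mul, Complex.conj_conj,
      one_mul, map_one]
  refine (pow_le_pow_iff_left₀ (by positivity) (by positivity) two_ne_zero).1 ?_
  rw [mul_pow, mul_pow, hnum, hden]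
  have hgap : 0 ≤ (s * t + r) * (1 - s ^ 2) * (1 - t ^ 2) := by
    have : 0 ≤ s := norm_nonneg x
    have : 0 ≤ t := norm_nonneg y
    have : 0 ≤ 1 - s ^ 2 := by nlinarith
    have : 0 ≤ 1 - t ^ 2 := by nlinarith
    have : 0 ≤ s * t + r := by linarith
    positivity
  linear_combination 2 * hgap

lemma dD_triangle (hz : z ∈ unitDisc) (hu : u ∈ unitDisc) (hw : w ∈ unitDisc) :
    dD z w ≤ dD z u + dD u w := by
  set x := mobius u z
  set y := mobius u w
  have hx : x ∈ unitDisc := mobius_mem_unitDisc hu hz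
  have hy : y ∈ unitDisc := mobius_mem_unitDisc hu hw
  -- `mobius u` moves the middle point `u` to `0`
  have hzw : ‖mobius z w‖ ≤ ‖mobius x y‖ := by
    simpa only [x, y, mobius_mobius hu hz, mobius_mobius hu hw] using
      norm_mobius_le_of_mapsTo (differentiableOn_mobius hu) (mapsTo_mobius hu) hx hy
  have hsum : (‖x‖ + ‖y‖) / (1 + ‖x‖ * ‖y‖) < 1 := by
    have hx' : ‖x‖ < 1 := hx
    have hy' : ‖y‖ < 1 := hy
    rw [div_lt_one (by positivity)]
    nlinarith [mul_pos (sub_pos.2 hx') (sub_pos.2 hy')]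
  calc dD z w ≤ arctanh ((‖x‖ + ‖y‖) / (1 + ‖x‖ * ‖y‖)) :=
        arctanh_le_arctanh (neg_one_lt_zero.trans_le (norm_nonneg _))
          (hzw.trans (norm_mobius_le hx hy)) hsum
    _ = dD u z + dD u w := by
        rw [← arctanh_add (neg_one_lt_zero.trans_le (norm_nonneg _)) hx
          (neg_one_lt_zero.trans_le (norm_nonneg _)) hy]
        rfl
    _ = dD z u + dD u w := by rw [dD_comm u z]

lemma abs_dD_sub_dD_le {z z' w w' : ℂ} (hz : z ∈ unitDisc) (hz' : z' ∈ unitDisc)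
    (hw : w ∈ unitDisc) (hw' : w' ∈ unitDisc) :
    |dD z z' - dD w w'| ≤ dD z w + dD z' w' := by
  have h₁ := dD_triangle hz hw hz'
  have h₂ := dD_triangle hw hw' hz'
  have h₃ := dD_triangle hw hz hw'
  have h₄ := dD_triangle hz hz' hw'
  rw [dD_comm w z] at h₃
  rw [dD_comm w' z'] at h₂
  rw [abs_sub_le_iff]
  constructor <;> linarith

end Hyperbolic

section Petal

open Function

variable {Δ : Set ℂ} {g : ℂ → ℂ}

lemma differentiableOn_invFunOn (hΔ : IsOpen Δ) (hg : DifferentiableOn ℂ g Δ)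
    (hgbij : BijOn g Δ unitDisc) : DifferentiableOn ℂ (invFunOn g Δ) unitDisc :=
  differentiableOn_of_leftInvOn_of_injOn hΔ isOpen_unitDisc hg hgbij.injOn
    hgbij.surjOn.mapsTo_invFunOn hgbij.invOn_invFunOn.2

lemma dD_le_dD_of_bijOn (hΔ : IsOpen Δ) (hΔD : Δ ⊆ unitDisc) (hg : DifferentiableOn ℂ g Δ)
    (hgbij : BijOn g Δ unitDisc) {x y : ℂ} (hx : x ∈ Δ) (hy : y ∈ Δ) :
    dD x y ≤ dD (g x) (g y) := by
  have := dD_le_of_mapsTo (differentiableOn_invFunOn hΔ hg hgbij)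
    (hgbij.surjOn.mapsTo_invFunOn.mono_right hΔD) (hgbij.mapsTo hx) (hgbij.mapsTo hy)
  rwa [hgbij.invOn_invFunOn.1 hx, hgbij.invOn_invFunOn.1 hy] at this

lemma dD_le_dD_of_mapsTo (hΔ : IsOpen Δ) (hg : DifferentiableOn ℂ g Δ)
    (hgbij : BijOn g Δ unitDisc) {h : ℂ → ℂ} (hh : DifferentiableOn ℂ h Δ) (hmaps : MapsTo h Δ Δ)
    {x y : ℂ} (hx : x ∈ Δ) (hy : y ∈ Δ) : dD (g (h x)) (g (h y)) ≤ dD (g x) (g y) := by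
  have hG := hgbij.surjOn.mapsTo_invFunOn
  have := dD_le_of_mapsTo (f := g ∘ h ∘ invFunOn g Δ)
    (hg.comp (hh.comp (differentiableOn_invFunOn hΔ hg hgbij) hG) (hmaps.comp hG))
    (hgbij.mapsTo.comp (hmaps.comp hG)) (hgbij.mapsTo hx) (hgbij.mapsTo hy)
  simpa only [Function.comp_apply, hgbij.invOn_invFunOn.1 hx, hgbij.invOn_invFunOn.1 hy]
    using this

lemma IsPetal.isOpen {φ : ℝ → ℂ → ℂ} (hΔ : IsPetal φ Δ) : IsOpen Δ := by
  obtain ⟨-, z, -, rfl⟩ := hΔ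
  exact isOpen_interior.connectedComponentIn

lemma IsPetal.subset_unitDisc {φ : ℝ → ℂ → ℂ} (hφ : IsSemigroupD φ) (hΔ : IsPetal φ Δ) :
    Δ ⊆ unitDisc := by
  obtain ⟨-, z, -, rfl⟩ := hΔ
  intro x hx
  obtain ⟨y, hy, rfl⟩ : x ∈ φ 0 '' unitDisc :=
    mem_iInter₂.1 (interior_subset (connectedComponentIn_subset _ _ hx)) 0 self_mem_Ici
  rwa [hφ.id0 y hy]

end Petal

/-- Proposition 3.1: for `z, w` in a petal `Δ` and `t ≤ 0`,
`|d_𝔻(z, φ_t(z)) - d_𝔻(w, φ_t(w))| ≤ 2 d_Δ(z, w)`. -/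
theorem stmt1 (φ : ℝ → ℂ → ℂ) (hφ : IsSemigroupD φ) (Δ : Set ℂ) (hΔ : IsPetal φ Δ)
    (hΔbij : ∀ t : ℝ, 0 ≤ t → Set.BijOn (φ t) Δ Δ)
    (hΔback : ∀ t : ℝ, t ≤ 0 → ∀ z ∈ Δ, φ t z ∈ Δ ∧ φ (-t) (φ t z) = z)
    (g : ℂ → ℂ) (hg : DifferentiableOn ℂ g Δ) (hgbij : Set.BijOn g Δ unitDisc)
    (z w : ℂ) (hz : z ∈ Δ) (hw : w ∈ Δ) (t : ℝ) (ht : t ≤ 0) :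
    |dD z (φ t z) - dD w (φ t w)| ≤ 2 * dD (g z) (g w) := by
  have hΔo := hΔ.isOpen
  have hΔD := hΔ.subset_unitDisc hφ
  have hs : 0 ≤ -t := neg_nonneg.2 ht
  have hmaps : MapsTo (φ t) Δ Δ := fun x hx => (hΔback t ht x hx).1
  have hφt : DifferentiableOn ℂ (φ t) Δ :=
    differentiableOn_of_leftInvOn_of_injOn hΔo hΔo ((hφ.holo _ hs).mono hΔD) (hΔbij _ hs).injOn
      hmaps fun x hx => (hΔback t ht x hx).2
  calc |dD z (φ t z) - dD w (φ t w)| ≤ dD z w + dD (φ t z) (φ t w) :=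
        abs_dD_sub_dD_le (hΔD hz) (hΔD (hmaps hz)) (hΔD hw) (hΔD (hmaps hw))
    _ ≤ dD (g z) (g w) + dD (g (φ t z)) (g (φ t w)) :=
        add_le_add (dD_le_dD_of_bijOn hΔo hΔD hg hgbij hz hw)
          (dD_le_dD_of_bijOn hΔo hΔD hg hgbij (hmaps hz) (hmaps hw))
    _ ≤ 2 * dD (g z) (g w) := by
        linarith [dD_le_dD_of_mapsTo hΔo hg hgbij hφt hmaps hz hw]
end

section
/- Let Ω ⊊ ℂ be a simply connected domain and ζ ∈ ℂ be such that ζ + t ∈ Ω for all t ≤ 0, and suppose there exists t₀ ≤ −e such that dist(ζ + t, ∂Ω) = 1/log(−t) for all t ≤ t₀. Then for every biholomorphism f : Ω → 𝔻, lim_{t → −∞} d_𝔻(f(ζ), f(ζ + t))/t² = 0. (This is the first construction estimate in the proof of Proposition 6.1, obtained from the upper bound d_Ω(u, v) ≤ ∫_Γ |dζ'|/dist(ζ', ∂Ω) along the horizontal segment Γ = [ζ + t, ζ + t₀].) -/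
open Filter Set

/-- `Ω` is a simply connected domain, a proper subdomain of `ℂ`. -/
def IsSCDomain (Ω : Set ℂ) : Prop :=
  IsOpen Ω ∧ IsConnected Ω ∧ Ω ≠ Set.univ ∧ SimplyConnectedSpace Ω

/-!
The point `ζ + s` of the ray is the centre of a disc of radius `1 / log (-s)` inside `Ω`, so by
Schwarz–Pick a step of length `1 / (2 log (-t))` along `[t, t₀]` has pseudo-hyperbolic image
length at most `1/2`, which changes `1 - ‖f‖` by at most a factor `8`. Chaining about
`2 |t| log |t|` such steps from `ζ + t₀` gives `1 - ‖f (ζ + t)‖ ≥ c · 8 ^ (-2 |t| log |t|)`, and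
`d_𝔻(z, w) ≤ ½ log (16 / ((1 - |z|) (1 - |w|)))` turns this into
`d_𝔻(f ζ, f (ζ + t)) = O(|t| log |t|) = o(t²)`.
-/

open Metric Complex ComplexConjugate Topology

noncomputable def pseudoHypDist (z w : ℂ) : ℝ := ‖(z - w) / (1 - conj z * w)‖

lemma dD_eq_arctanh_pseudoHypDist (z w : ℂ) : dD z w = arctanh (pseudoHypDist z w) := rfl

lemma arctanh_nonneg {x : ℝ} (h0 : 0 ≤ x) (h1 : x < 1) : 0 ≤ arctanh x :=
  mul_nonneg (by norm_num) (Real.log_nonneg ((one_le_div (by linarith)).2 (by linarith)))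

lemma norm_one_sub_conj_mul_sq_sub_norm_sub_sq (z w : ℂ) :
    ‖1 - conj z * w‖ ^ 2 - ‖z - w‖ ^ 2 = (1 - ‖z‖ ^ 2) * (1 - ‖w‖ ^ 2) := by
  simp only [Complex.sq_norm, normSq_apply, sub_re, sub_im, mul_re, mul_im, one_re, one_im,
    conj_re, conj_im]
  ring

lemma one_sub_norm_mul_norm_le_norm_one_sub_conj_mul (z w : ℂ) :
    1 - ‖z‖ * ‖w‖ ≤ ‖1 - conj z * w‖ := by
  simpa [norm_mul] using norm_sub_norm_le (1 : ℂ) (conj z * w)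

lemma one_sub_pseudoHypDist_sq_mul {z w : ℂ} (hz : ‖z‖ < 1) (hw : ‖w‖ < 1) :
    (1 - pseudoHypDist z w ^ 2) * ‖1 - conj z * w‖ ^ 2 = (1 - ‖z‖ ^ 2) * (1 - ‖w‖ ^ 2) := by
  have hpos : 0 < ‖1 - conj z * w‖ := by
    have := one_sub_norm_mul_norm_le_norm_one_sub_conj_mul z w
    nlinarith [norm_nonneg z, norm_nonneg w]
  rw [← norm_one_sub_conj_mul_sq_sub_norm_sub_sq, pseudoHypDist, norm_div, sub_mul, one_mul,
    div_pow, div_mul_cancel₀ _ (pow_ne_zero 2 hpos.ne')]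

lemma pseudoHypDist_lt_one {z w : ℂ} (hz : ‖z‖ < 1) (hw : ‖w‖ < 1) :
    pseudoHypDist z w < 1 := by
  have h := one_sub_pseudoHypDist_sq_mul hz hw
  have hρ : 0 ≤ pseudoHypDist z w := norm_nonneg _
  have hrhs : 0 < (1 - ‖z‖ ^ 2) * (1 - ‖w‖ ^ 2) := by
    apply mul_pos <;> nlinarith [norm_nonneg z, norm_nonneg w]
  have : 0 < 1 - pseudoHypDist z w ^ 2 := by
    by_contra! hle
    nlinarith [mul_nonpos_of_nonpos_of_nonneg hle (sq_nonneg ‖1 - conj z * w‖)]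
  nlinarith

lemma one_sub_norm_le_of_pseudoHypDist_le {z w : ℂ} (hz : ‖z‖ < 1) (hw : ‖w‖ < 1)
    (hρ : pseudoHypDist z w ≤ 1 / 2) : 1 - ‖w‖ ≤ 8 * (1 - ‖z‖) := by
  have h := one_sub_pseudoHypDist_sq_mul hz hw
  have hD := one_sub_norm_mul_norm_le_norm_one_sub_conj_mul z w
  have hρ0 : 0 ≤ pseudoHypDist z w := norm_nonneg _
  have hz0 := norm_nonneg z
  have hw0 := norm_nonneg w
  have hDw : (1 - ‖w‖) ^ 2 ≤ ‖1 - conj z * w‖ ^ 2 := by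
    gcongr
    linarith [mul_le_of_le_one_left hw0 hz.le]
  have hρ2 : 3 / 4 ≤ 1 - pseudoHypDist z w ^ 2 := by nlinarith
  have hlow : 3 / 4 * (1 - ‖w‖) ^ 2 ≤ (1 - ‖z‖ ^ 2) * (1 - ‖w‖ ^ 2) := by
    rw [← h]; exact mul_le_mul hρ2 hDw (sq_nonneg _) (by linarith)
  have hup : (1 - ‖z‖ ^ 2) * (1 - ‖w‖ ^ 2) ≤ 4 * ((1 - ‖z‖) * (1 - ‖w‖)) := by
    have : (1 - ‖z‖ ^ 2) * (1 - ‖w‖ ^ 2) = ((1 + ‖z‖) * (1 + ‖w‖)) * ((1 - ‖z‖) * (1 - ‖w‖)) := by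
      ring
    rw [this]
    exact mul_le_mul_of_nonneg_right (by nlinarith) (mul_nonneg (by linarith) (by linarith))
  nlinarith

lemma dD_nonneg {z w : ℂ} (hz : ‖z‖ < 1) (hw : ‖w‖ < 1) : 0 ≤ dD z w :=
  arctanh_nonneg (norm_nonneg _) (pseudoHypDist_lt_one hz hw)

lemma dD_le_log_sixteen_sub {z w : ℂ} (hz : ‖z‖ < 1) (hw : ‖w‖ < 1) :
    dD z w ≤ (Real.log 16 - Real.log (1 - ‖z‖) - Real.log (1 - ‖w‖)) / 2 := by
  rw [dD_eq_arctanh_pseudoHypDist]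
  set ρ := pseudoHypDist z w
  have h := one_sub_pseudoHypDist_sq_mul hz hw
  have hρ1 : ρ < 1 := pseudoHypDist_lt_one hz hw
  have hρ0 : 0 ≤ ρ := norm_nonneg _
  have hz0 := norm_nonneg z
  have hw0 := norm_nonneg w
  have hD : ‖1 - conj z * w‖ ≤ 2 := by
    calc ‖1 - conj z * w‖ ≤ ‖(1 : ℂ)‖ + ‖conj z * w‖ := norm_sub_le _ _
      _ ≤ 2 := by rw [norm_mul, norm_conj, norm_one]; nlinarith
  have hzw : 0 < (1 - ‖z‖) * (1 - ‖w‖) := mul_pos (by linarith) (by linarith)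
  have hbound : (1 + ρ) / (1 - ρ) ≤ 16 / ((1 - ‖z‖) * (1 - ‖w‖)) := by
    have hQP : (1 - ‖z‖) * (1 - ‖w‖) ≤ (1 - ‖z‖ ^ 2) * (1 - ‖w‖ ^ 2) :=
      mul_le_mul (by nlinarith) (by nlinarith) (by linarith) (by nlinarith)
    have hP : (1 - ‖z‖ ^ 2) * (1 - ‖w‖ ^ 2) ≤ 4 * ((1 - ρ) * (1 + ρ)) := by
      have hD4 : ‖1 - conj z * w‖ ^ 2 ≤ 4 := by nlinarith [norm_nonneg (1 - conj z * w)]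
      have hρ2 : 0 ≤ 1 - ρ ^ 2 := by nlinarith
      calc (1 - ‖z‖ ^ 2) * (1 - ‖w‖ ^ 2) = (1 - ρ ^ 2) * ‖1 - conj z * w‖ ^ 2 := h.symm
        _ ≤ (1 - ρ ^ 2) * 4 := by gcongr
        _ = 4 * ((1 - ρ) * (1 + ρ)) := by ring
    rw [div_le_div_iff₀ (by linarith) hzw]
    nlinarith
  have hlog := Real.log_le_log (div_pos (by linarith) (by linarith)) hbound
  rw [Real.log_div (by norm_num) hzw.ne', Real.log_mul (by linarith) (by linarith)] at hlog
  rw [arctanh]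
  linarith

lemma ball_infDist_frontier_subset {E : Type*} [NormedAddCommGroup E] [NormedSpace ℝ E]
    {Ω : Set E} (hΩ : IsOpen Ω) {x : E} (hx : x ∈ Ω) :
    ball x (infDist x (frontier Ω)) ⊆ Ω := by
  rcases (ball x (infDist x (frontier Ω))).eq_empty_or_nonempty with hempty | hne
  · simp [hempty]
  refine (convex_ball x _).isPreconnected.subset_of_closure_inter_subset hΩ
    ⟨x, mem_ball_self (nonempty_ball.1 hne), hx⟩ ?_
  rintro y ⟨hyc, hyb⟩
  have hyf : y ∉ frontier Ω := ball_infDist_subset_compl hyb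
  rw [frontier, hΩ.interior_eq] at hyf
  by_contra hyΩ
  exact hyf ⟨hyc, hyΩ⟩

lemma pseudoHypDist_le_dist_div_of_mapsTo_ball {f : ℂ → ℂ} {c z : ℂ} {R : ℝ}
    (hd : DifferentiableOn ℂ f (ball c R)) (hmaps : MapsTo f (ball c R) unitDisc)
    (hz : z ∈ ball c R) : pseudoHypDist (f c) (f z) ≤ dist z c / R := by
  have hc : ‖f c‖ < 1 := hmaps (mem_ball_self (pos_of_mem_ball hz))
  have hden : ∀ u ∈ ball c R, 1 - conj (f c) * f u ≠ 0 := fun u hu h0 => by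
    have := one_sub_norm_mul_norm_le_norm_one_sub_conj_mul (f c) (f u)
    rw [h0, norm_zero] at this
    have hu' : ‖f u‖ < 1 := hmaps hu
    linarith [mul_lt_one_of_nonneg_of_lt_one_left (norm_nonneg _) hc hu'.le]
  -- Schwarz's lemma applied to `f` followed by the disc automorphism sending `f c` to `0`
  set g : ℂ → ℂ := fun u => (f c - f u) / (1 - conj (f c) * f u)
  have hgd : DifferentiableOn ℂ g (ball c R) :=
    ((differentiableOn_const _).sub hd).div
      ((differentiableOn_const _).sub ((differentiableOn_const _).mul hd)) hden
  have hgmaps : MapsTo g (ball c R) (closedBall (g c) 1) := by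
    intro u hu
    simpa [g, pseudoHypDist] using (pseudoHypDist_lt_one hc (hmaps hu)).le
  simpa [g, pseudoHypDist, div_eq_inv_mul] using dist_le_div_mul_dist_of_mapsTo_ball hgd hgmaps hz

lemma one_sub_norm_le_eight_mul_of_two_mul_dist_le {f : ℂ → ℂ} {a b : ℂ} {R : ℝ}
    (hd : DifferentiableOn ℂ f (ball a R)) (hmaps : MapsTo f (ball a R) unitDisc)
    (hR : 0 < R) (hab : 2 * dist b a ≤ R) : 1 - ‖f b‖ ≤ 8 * (1 - ‖f a‖) := by
  have hb : b ∈ ball a R := by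
    rw [mem_ball]; linarith [dist_nonneg (x := b) (y := a)]
  refine one_sub_norm_le_of_pseudoHypDist_le (hmaps (mem_ball_self hR)) (hmaps hb) ?_
  calc pseudoHypDist (f a) (f b) ≤ dist b a / R :=
        pseudoHypDist_le_dist_div_of_mapsTo_ball hd hmaps hb
    _ ≤ 1 / 2 := by rw [div_le_iff₀ hR]; linarith

lemma le_pow_mul_of_forall_le_mul {g : ℝ → ℝ} {a b δ C : ℝ} (hδ : 0 ≤ δ) (hC : 0 ≤ C)
    (hstep : ∀ x ∈ Icc a b, ∀ y ∈ Icc a b, |x - y| ≤ δ → g x ≤ C * g y) :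
    ∀ n : ℕ, ∀ x ∈ Icc a b, x - a ≤ n * δ → g x ≤ C ^ n * g a := by
  intro n
  induction n with
  | zero =>
    intro x hx hxa
    have : x = a := by
      rw [Nat.cast_zero, zero_mul] at hxa
      linarith [hx.1]
    simp [this]
  | succ n ih =>
    intro x hx hxa
    set y := max a (x - δ)
    have hy : y ∈ Icc a b := ⟨le_max_left _ _, max_le (hx.1.trans hx.2) (by linarith [hx.2])⟩
    have hxy : |x - y| ≤ δ := by
      rw [abs_le]; constructor <;> simp only [y] <;> cases max_cases a (x - δ) <;> linarith [hx.1]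
    have hya : y - a ≤ n * δ := by
      push_cast at hxa
      simp only [y]; cases max_cases a (x - δ) <;> nlinarith
    calc g x ≤ C * g y := hstep x hx y hy hxy
      _ ≤ C * (C ^ n * g a) := mul_le_mul_of_nonneg_left (ih y hy hya) hC
      _ = C ^ (n + 1) * g a := by ring

lemma tendsto_add_mul_neg_mul_log_neg_div_sq_atBot (A K : ℝ) :
    Tendsto (fun t : ℝ => (A + K * (-t * Real.log (-t))) / t ^ 2) atBot (𝓝 0) := by
  have hlog : Tendsto (fun x : ℝ => Real.log x / x) atTop (𝓝 0) := by
    simpa using Real.isLittleO_log_id_atTop.tendsto_div_nhds_zero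
  have hinv : Tendsto (fun x : ℝ => A / x ^ 2) atTop (𝓝 0) :=
    tendsto_const_nhds.div_atTop (tendsto_pow_atTop two_ne_zero)
  have h : Tendsto (fun x : ℝ => (A + K * (x * Real.log x)) / x ^ 2) atTop (𝓝 0) := by
    have := hinv.add (hlog.const_mul K)
    rw [mul_zero, add_zero] at this
    refine this.congr' ?_
    filter_upwards [eventually_gt_atTop 0] with x hx
    field_simp
  simpa [Function.comp_def] using h.comp tendsto_neg_atBot_atTop

lemma one_le_log_neg {t : ℝ} (ht : t ≤ -Real.exp 1) : 1 ≤ Real.log (-t) := by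
  rw [Real.le_log_iff_exp_le (by linarith [Real.exp_pos 1])]
  linarith

section Ray

variable {Ω : Set ℂ} {ζ : ℂ} {t₀ : ℝ} {f : ℂ → ℂ}

lemma one_sub_norm_le_eight_pow_mul (hΩ : IsOpen Ω) (hζ : ∀ t : ℝ, t ≤ 0 → ζ + (t : ℂ) ∈ Ω)
    (ht₀ : t₀ ≤ -Real.exp 1)
    (hdist : ∀ t : ℝ, t ≤ t₀ →
      Metric.infDist (ζ + (t : ℂ)) (frontier Ω) = 1 / Real.log (-t))
    (hf : DifferentiableOn ℂ f Ω) (hmaps : MapsTo f Ω unitDisc) {t : ℝ} (ht : t ≤ t₀) :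
    1 - ‖f (ζ + t₀)‖ ≤ 8 ^ ⌈2 * (t₀ - t) * Real.log (-t)⌉₊ * (1 - ‖f (ζ + t)‖) := by
  set L := Real.log (-t)
  have hL : 1 ≤ L := one_le_log_neg (ht.trans ht₀)
  have hstep : ∀ x ∈ Icc t t₀, ∀ y ∈ Icc t t₀, |x - y| ≤ 1 / (2 * L) →
      1 - ‖f (ζ + x)‖ ≤ 8 * (1 - ‖f (ζ + y)‖) := by
    intro x hx y hy hxy
    have hLy : 1 ≤ Real.log (-y) := one_le_log_neg (hy.2.trans ht₀)
    have hball : ball (ζ + y) (1 / Real.log (-y)) ⊆ Ω :=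
      hdist y hy.2 ▸ ball_infDist_frontier_subset hΩ (hζ y (by linarith [hy.2, Real.exp_pos 1]))
    refine one_sub_norm_le_eight_mul_of_two_mul_dist_le (hf.mono hball) (hmaps.mono_left hball)
      (by positivity) ?_
    have hLyL : Real.log (-y) ≤ L := Real.log_le_log (by linarith [hLy, hy.2, Real.exp_pos 1])
      (by linarith [hy.1])
    rw [dist_add_left, Complex.dist_eq, ← Complex.ofReal_sub, Complex.norm_real, Real.norm_eq_abs]
    calc 2 * |x - y| ≤ 1 / L := by rw [le_div_iff₀ (by linarith)] at hxy ⊢; linarith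
      _ ≤ 1 / Real.log (-y) := one_div_le_one_div_of_le (by linarith) hLyL
  refine le_pow_mul_of_forall_le_mul (by positivity) (by norm_num) hstep _ t₀ ⟨ht, le_rfl⟩ ?_
  calc t₀ - t = 2 * (t₀ - t) * L * (1 / (2 * L)) := by field_simp
    _ ≤ _ := by gcongr; exact Nat.le_ceil _

lemma dD_le_along_ray (hΩ : IsOpen Ω) (hζ : ∀ t : ℝ, t ≤ 0 → ζ + (t : ℂ) ∈ Ω)
    (ht₀ : t₀ ≤ -Real.exp 1)
    (hdist : ∀ t : ℝ, t ≤ t₀ →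
      Metric.infDist (ζ + (t : ℂ)) (frontier Ω) = 1 / Real.log (-t))
    (hf : DifferentiableOn ℂ f Ω) (hmaps : MapsTo f Ω unitDisc) {t : ℝ} (ht : t ≤ t₀) :
    dD (f ζ) (f (ζ + t)) ≤
      (Real.log 16 - Real.log (1 - ‖f ζ‖) - Real.log (1 - ‖f (ζ + t₀)‖) + Real.log 8) / 2
        + Real.log 8 * (-t * Real.log (-t)) := by
  have ht₀0 : t₀ ≤ 0 := by linarith [Real.exp_pos 1]
  have hfζ : ‖f ζ‖ < 1 := hmaps (by simpa using hζ 0 le_rfl)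
  have hft : ‖f (ζ + t)‖ < 1 := hmaps (hζ t (ht.trans ht₀0))
  have hc₀ : 0 < 1 - ‖f (ζ + t₀)‖ := sub_pos.2 (hmaps (hζ t₀ ht₀0))
  have hL : 1 ≤ Real.log (-t) := one_le_log_neg (ht.trans ht₀)
  set N := ⌈2 * (t₀ - t) * Real.log (-t)⌉₊
  have hlog : Real.log (1 - ‖f (ζ + t₀)‖) ≤ N * Real.log 8 + Real.log (1 - ‖f (ζ + t)‖) := by
    have := Real.log_le_log hc₀ (one_sub_norm_le_eight_pow_mul hΩ hζ ht₀ hdist hf hmaps ht)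
    rwa [Real.log_mul (by positivity) (by linarith), Real.log_pow] at this
  have hN : (N : ℝ) ≤ 2 * (-t * Real.log (-t)) + 1 := by
    have := Nat.ceil_lt_add_one (show 0 ≤ 2 * (t₀ - t) * Real.log (-t) by nlinarith)
    nlinarith
  have hlog8 : 0 < Real.log 8 := Real.log_pos (by norm_num)
  have := dD_le_log_sixteen_sub hfζ hft
  nlinarith [mul_le_mul_of_nonneg_right hN hlog8.le]

end Ray

/-- First construction estimate in Proposition 6.1: if
`dist(ζ + t, ∂Ω) = 1/log(-t)` for all `t ≤ t₀ ≤ -e`, then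
`lim_{t → -∞} d_Ω(ζ, ζ + t)/t² = 0`. -/
theorem stmt16 (Ω : Set ℂ) (hΩ : IsSCDomain Ω) (ζ : ℂ)
    (hζ : ∀ t : ℝ, t ≤ 0 → ζ + (t : ℂ) ∈ Ω)
    (t₀ : ℝ) (ht₀ : t₀ ≤ -Real.exp 1)
    (hdist : ∀ t : ℝ, t ≤ t₀ →
      Metric.infDist (ζ + (t : ℂ)) (frontier Ω) = 1 / Real.log (-t))
    (f : ℂ → ℂ) (hf : DifferentiableOn ℂ f Ω) (hfbij : Set.BijOn f Ω unitDisc) :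
    Filter.Tendsto (fun t : ℝ => dD (f ζ) (f (ζ + (t : ℂ))) / t ^ 2)
      Filter.atBot (nhds 0) := by
  have hmaps : MapsTo f Ω unitDisc := hfbij.mapsTo
  obtain ⟨A, hbound⟩ : ∃ A, ∀ t ≤ t₀,
      dD (f ζ) (f (ζ + t)) ≤ A + Real.log 8 * (-t * Real.log (-t)) :=
    ⟨_, fun t ht => dD_le_along_ray hΩ.1 hζ ht₀ hdist hf hmaps ht⟩
  refine tendsto_of_tendsto_of_tendsto_of_le_of_le' tendsto_const_nhds
    (tendsto_add_mul_neg_mul_log_neg_div_sq_atBot A (Real.log 8)) ?_ ?_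
  · filter_upwards [eventually_le_atBot 0] with t ht
    exact div_nonneg (dD_nonneg (hmaps (by simpa using hζ 0 le_rfl)) (hmaps (hζ t ht)))
      (sq_nonneg t)
  · filter_upwards [eventually_le_atBot t₀] with t ht
    gcongr
    exact hbound t ht
end
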